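/- Let Δ ⊂ ℝⁿ be a compact convex set with 0 in its interior, let ξ ∈ ℝⁿ be the unique vector with ∫_Δ u e^{⟨ξ,u⟩} du = 0, and let σ : ℝⁿ → ℝⁿ be an invertible linear map with σ(Δ) = Δ. Then σᵀξ = ξ, where σᵀ denotes the transpose of σ. -/

import Mathlib

/-! Substituting `u = σ w` turns `∫_Δ u e^{⟨ξ, u⟩} du` into
`|det σ| • σ (∫_Δ w e^{⟨σᵀ ξ, w⟩} dw)`, so `σᵀ ξ` solves the same equation as `ξ`, and
uniqueness forces `σᵀ ξ = ξ`. -/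

open MeasureTheory
open scoped RealInnerProductSpace

section ChangeOfVariables

variable {E F : Type*} [NormedAddCommGroup E] [NormedSpace ℝ E] [FiniteDimensional ℝ E]
  [MeasurableSpace E] [BorelSpace E] (μ : Measure E) [μ.IsAddHaarMeasure]
  [NormedAddCommGroup F] [NormedSpace ℝ F]

theorem LinearEquiv.setIntegral_image (e : E ≃ₗ[ℝ] E) {s : Set E} (hs : MeasurableSet s)
    (g : E → F) :
    ∫ x in e '' s, g x ∂μ = |LinearMap.det (e : E →ₗ[ℝ] E)| • ∫ x in s, g (e x) ∂μ := by
  let τ := LinearMap.toContinuousLinearMap (e : E →ₗ[ℝ] E)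
  have hτ : ∀ x ∈ s, HasFDerivWithinAt e τ s x := fun _ _ =>
    τ.hasFDerivAt.hasFDerivWithinAt
  rw [integral_image_eq_integral_abs_det_fderiv_smul μ hs hτ e.injective.injOn, integral_smul]
  rfl

end ChangeOfVariables

section ExpMoment

variable {E : Type*} [NormedAddCommGroup E] [InnerProductSpace ℝ E] [FiniteDimensional ℝ E]
  [MeasurableSpace E] [BorelSpace E] (μ : Measure E) [μ.IsAddHaarMeasure]

noncomputable def expMoment (s : Set E) (η : E) : E :=
  ∫ u in s, Real.exp ⟪η, u⟫ • u ∂μ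

theorem expMoment_image (e : E ≃ₗ[ℝ] E) {s : Set E} (hs : MeasurableSet s) (ξ : E) :
    expMoment μ (e '' s) ξ =
      |LinearMap.det (e : E →ₗ[ℝ] E)| •
        e (expMoment μ s (LinearMap.adjoint (e : E →ₗ[ℝ] E) ξ)) := by
  have hexp : ∀ x, Real.exp ⟪ξ, e x⟫ • e x = e.toContinuousLinearEquiv
      (Real.exp ⟪LinearMap.adjoint (e : E →ₗ[ℝ] E) ξ, x⟫ • x) := by
    intro x
    rw [LinearEquiv.coe_toContinuousLinearEquiv', map_smul, LinearMap.adjoint_inner_left]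
    rfl
  rw [expMoment, e.setIntegral_image μ hs]
  simp only [hexp]
  rw [ContinuousLinearEquiv.integral_comp_comm]
  rfl

theorem expMoment_adjoint_eq_zero (e : E ≃ₗ[ℝ] E) {s : Set E} (hs : MeasurableSet s)
    (hes : e '' s = s) {ξ : E} (hξ : expMoment μ s ξ = 0) :
    expMoment μ s (LinearMap.adjoint (e : E →ₗ[ℝ] E) ξ) = 0 := by
  have hdet : |LinearMap.det (e : E →ₗ[ℝ] E)| ≠ 0 := abs_ne_zero.mpr e.isUnit_det'.ne_zero
  have h := expMoment_image μ e hs ξ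
  rw [hes, hξ] at h
  simpa [hdet] using h.symm

end ExpMoment

theorem stmt9_general (n : ℕ) (Δ : Set (EuclideanSpace ℝ (Fin n))) (hc : IsCompact Δ)
    (ξ : EuclideanSpace ℝ (Fin n))
    (hξ : (∫ u in Δ, Real.exp ⟪ξ, u⟫ • u) = 0)
    (huniq : ∀ η : EuclideanSpace ℝ (Fin n),
      (∫ u in Δ, Real.exp ⟪η, u⟫ • u) = 0 → η = ξ)
    (σ : EuclideanSpace ℝ (Fin n) →ₗ[ℝ] EuclideanSpace ℝ (Fin n))
    (hσ : Function.Bijective σ) (hσΔ : σ '' Δ = Δ) :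
    LinearMap.adjoint σ ξ = ξ :=
  huniq _ (expMoment_adjoint_eq_zero volume (LinearEquiv.ofBijective σ hσ) hc.measurableSet
    hσΔ hξ)

theorem stmt9 (n : ℕ) (Δ : Set (EuclideanSpace ℝ (Fin n))) (hc : IsCompact Δ)
    (hconv : Convex ℝ Δ) (h0 : (0 : EuclideanSpace ℝ (Fin n)) ∈ interior Δ)
    (ξ : EuclideanSpace ℝ (Fin n))
    (hξ : (∫ u in Δ, Real.exp ⟪ξ, u⟫ • u) = 0)
    (huniq : ∀ η : EuclideanSpace ℝ (Fin n),
      (∫ u in Δ, Real.exp ⟪η, u⟫ • u) = 0 → η = ξ)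
    (σ : EuclideanSpace ℝ (Fin n) →ₗ[ℝ] EuclideanSpace ℝ (Fin n))
    (hσ : Function.Bijective σ) (hσΔ : σ '' Δ = Δ) :
    LinearMap.adjoint σ ξ = ξ :=
  stmt9_general n Δ hc ξ hξ huniq σ hσ hσΔ
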